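/- arXiv:0808.3879 — 2 statements merged into one kernel-verified Lean document; each statement's English description precedes it below -/
import Mathlib

section
/- Let a(ξ₁,ξ₂) = ∑_{(j,k)∈S_a} a_{j,k} e^{i(jξ₁ + kξ₂)} and b(ξ₁,ξ₂) = ∑_{(j,k)∈S_b} b_{j,k} e^{i(jξ₁ + kξ₂)} be nonzero trigonometric polynomials on ℝ² with finite frequency sets S_a, S_b ⊆ ℤ² and complex coefficients. Suppose α, β ≥ 2 are integers and a(ξ₁, βξ₂) b(ξ₁, ξ₂) = a(ξ₁, ξ₂) b(αξ₁, ξ₂) for all (ξ₁,ξ₂) ∈ ℝ². Then a_{j,k} = 0 whenever k ≠ 0 and b_{j,k} = 0 whenever j ≠ 0; that is, a(ξ₁,ξ₂) depends only on ξ₁ and b(ξ₁,ξ₂) depends only on ξ₂. -/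
open Complex

noncomputable section

/-- The trigonometric polynomial on `ℝ²` with (finitely supported) coefficients `c`. -/
def trigPoly (c : ℤ × ℤ →₀ ℂ) (ξ₁ ξ₂ : ℝ) : ℂ :=
  c.sum fun p a => a * Complex.exp (Complex.I * ((p.1 : ℂ) * (ξ₁ : ℂ) + (p.2 : ℂ) * (ξ₂ : ℂ)))

/-!
Passing to coefficients (the characters `e^{i⟨p, ξ⟩}` are linearly independent), the identity
reads `A(x, y^β) B(x, y) = A(x, y) B(x^α, y)` in the Laurent polynomial ring `ℂ[ℤ²]`. Fix a
monomial order on `ℤ²` that is preserved by positive diagonal scalings. The leading exponent of a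
product is the sum of the leading exponents, and the scalings map leading exponents to leading
exponents, so the leading exponents `a₀` of `A` and `b₀` of `B` satisfy
`(a₀₁, β a₀₂) + b₀ = a₀ + (α b₀₁, b₀₂)`, whence `a₀₂ = 0` and `b₀₁ = 0`. With the lexicographic
orders putting `ξ₂` (resp. `ξ₁`) first, and their reverses, this says that the largest and the
smallest `ξ₂`-frequency of `a`, and the largest and the smallest `ξ₁`-frequency of `b`, are `0`.
-/

open Function

theorem UniqueAdd.of_isMaxOn {G B : Type*} [AddZeroClass G] [AddCommMonoid B] [LinearOrder B]
    [IsOrderedCancelAddMonoid B] {D : G →+ B} (hD : Injective D) {s t : Finset G} {a₀ b₀ : G}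
    (ha₀ : IsMaxOn D s a₀) (hb₀ : IsMaxOn D t b₀) : UniqueAdd s t a₀ b₀ := by
  intro a b ha hb hab
  have hDa : D a ≤ D a₀ := ha₀ ha
  have hDb : D b ≤ D b₀ := hb₀ hb
  have hsum : D a + D b = D a₀ + D b₀ := by rw [← map_add, ← map_add, hab]
  constructor
  · refine hD (le_antisymm hDa (not_lt.mp fun hlt => ?_))
    exact (add_lt_add_of_lt_of_le hlt hDb).ne hsum
  · refine hD (le_antisymm hDb (not_lt.mp fun hlt => ?_))
    exact (add_lt_add_of_le_of_lt hDa hlt).ne hsum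

namespace AddMonoidAlgebra

variable {R G B : Type*} [Semiring R]

theorem isMaxOn_support_mapDomain [Preorder B] {D : G → B} {s : G → G} (hs : Injective s)
    (hsD : ∀ p q, D p ≤ D q → D (s p) ≤ D (s q)) {f : R[G]} {a₀ : G}
    (ha₀ : a₀ ∈ f.coeff.support) (hfa₀ : IsMaxOn D f.coeff.support a₀) :
    s a₀ ∈ (mapDomain s f).coeff.support ∧ IsMaxOn D (mapDomain s f).coeff.support (s a₀) := by
  classical
  rw [coeff_mapDomain, Finsupp.mapDomain_support_of_injective hs]
  exact ⟨Finset.mem_image_of_mem s ha₀, Finset.forall_mem_image.mpr fun p hp => hsD _ _ (hfa₀ hp)⟩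

variable [AddMonoid G] [AddCommMonoid B] [LinearOrder B] [IsOrderedCancelAddMonoid B]
  {D : G →+ B}

theorem isMaxOn_support_mul [NoZeroDivisors R] (hD : Injective D) {f g : R[G]} {a₀ b₀ : G}
    (ha₀ : a₀ ∈ f.coeff.support) (hfa₀ : IsMaxOn D f.coeff.support a₀)
    (hb₀ : b₀ ∈ g.coeff.support) (hgb₀ : IsMaxOn D g.coeff.support b₀) :
    a₀ + b₀ ∈ (f * g).coeff.support ∧ IsMaxOn D (f * g).coeff.support (a₀ + b₀) := by
  classical
  refine ⟨?_, fun c hc => ?_⟩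
  · rw [Finsupp.mem_support_iff, coeff_mul_add_of_uniqueAdd (UniqueAdd.of_isMaxOn hD hfa₀ hgb₀)]
    exact mul_ne_zero (Finsupp.mem_support_iff.mp ha₀) (Finsupp.mem_support_iff.mp hb₀)
  · obtain ⟨a, ha, b, hb, rfl⟩ := Finset.mem_add.mp (support_coeff_mul_subset f g hc)
    show D (a + b) ≤ D (a₀ + b₀)
    rw [map_add, map_add]
    exact add_le_add (hfa₀ ha) (hgb₀ hb)

theorem exists_isMaxOn_add_eq_add_of_mapDomain_mul_eq [NoZeroDivisors R] (hD : Injective D)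
    {s t : G → G} (hs : Injective s) (ht : Injective t)
    (hsD : ∀ p q, D p ≤ D q → D (s p) ≤ D (s q)) (htD : ∀ p q, D p ≤ D q → D (t p) ≤ D (t q))
    {f g : R[G]} (hf : f ≠ 0) (hg : g ≠ 0) (hfg : mapDomain s f * g = f * mapDomain t g) :
    ∃ a₀ b₀, IsMaxOn D f.coeff.support a₀ ∧ IsMaxOn D g.coeff.support b₀ ∧
      s a₀ + b₀ = a₀ + t b₀ := by
  obtain ⟨a₀, ha₀, hfa₀⟩ :=
    Finset.exists_max_image _ D (Finsupp.support_nonempty_iff.mpr (mt coeff_eq_zero.mp hf))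
  obtain ⟨b₀, hb₀, hgb₀⟩ :=
    Finset.exists_max_image _ D (Finsupp.support_nonempty_iff.mpr (mt coeff_eq_zero.mp hg))
  refine ⟨a₀, b₀, hfa₀, hgb₀, ?_⟩
  obtain ⟨hsa₀, hsfa₀⟩ := isMaxOn_support_mapDomain hs hsD ha₀ hfa₀
  obtain ⟨htb₀, htgb₀⟩ := isMaxOn_support_mapDomain ht htD hb₀ hgb₀
  obtain ⟨hl, hlmax⟩ := isMaxOn_support_mul hD hsa₀ hsfa₀ hb₀ hgb₀
  obtain ⟨hr, hrmax⟩ := isMaxOn_support_mul hD ha₀ hfa₀ htb₀ htgb₀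
  rw [hfg] at hl hlmax
  exact hD (le_antisymm (hrmax hl) (hlmax hr))

end AddMonoidAlgebra

theorem int_eq_of_forall_cexp_eq {m n : ℤ}
    (h : ∀ t : ℝ, cexp (I * (m * t)) = cexp (I * (n * t))) : m = n := by
  by_contra hmn
  have hd : ((m : ℂ) - n) ≠ 0 := by exact_mod_cast sub_ne_zero.mpr hmn
  obtain ⟨k, hk⟩ := exp_eq_exp_iff_exists_int.mp (h (Real.pi / (m - n)))
  have ht : ((m : ℂ) - n) * ((Real.pi / (m - n) : ℝ) : ℂ) = Real.pi := by
    push_cast; field_simp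
  have hπk : ((Real.pi : ℂ) * I) * (1 - 2 * k) = 0 := by linear_combination hk - I * ht
  have hk' : (1 : ℂ) - 2 * k = 0 :=
    (mul_eq_zero.mp hπk).resolve_left (mul_ne_zero (by exact_mod_cast Real.pi_ne_zero) I_ne_zero)
  have : (1 : ℤ) - 2 * k = 0 := by exact_mod_cast hk'
  omega

namespace TrigPoly

open AddMonoidAlgebra

def charExp (p : ℤ × ℤ) (ξ : ℝ × ℝ) : ℂ :=
  cexp (I * ((p.1 : ℂ) * (ξ.1 : ℂ) + (p.2 : ℂ) * (ξ.2 : ℂ)))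

theorem charExp_zero_left (ξ : ℝ × ℝ) : charExp 0 ξ = 1 := by simp [charExp]

theorem charExp_add_left (p q : ℤ × ℤ) (ξ : ℝ × ℝ) :
    charExp (p + q) ξ = charExp p ξ * charExp q ξ := by
  simp only [charExp, ← exp_add, Prod.fst_add, Prod.snd_add]; push_cast; ring_nf

theorem charExp_zero_right (p : ℤ × ℤ) : charExp p 0 = 1 := by simp [charExp]

theorem charExp_add_right (p : ℤ × ℤ) (ξ η : ℝ × ℝ) :
    charExp p (ξ + η) = charExp p ξ * charExp p η := by
  simp only [charExp, ← exp_add, Prod.fst_add, Prod.snd_add]; push_cast; ring_nf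

theorem charExp_injective : Injective charExp := by
  intro p q h
  have h₁ t : charExp p (t, 0) = charExp q (t, 0) := congrFun h _
  have h₂ t : charExp p (0, t) = charExp q (0, t) := congrFun h _
  simp only [charExp, ofReal_zero, mul_zero, add_zero, zero_add] at h₁ h₂
  exact Prod.ext (int_eq_of_forall_cexp_eq h₁) (int_eq_of_forall_cexp_eq h₂)

theorem linearIndependent_charExp : LinearIndependent ℂ charExp :=
  (linearIndependent_monoidHom (Multiplicative (ℝ × ℝ)) ℂ).comp
    (fun p => ⟨⟨fun ξ => charExp p ξ.toAdd, charExp_zero_right p⟩,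
      fun ξ η => charExp_add_right p ξ.toAdd η.toAdd⟩)
    fun _ _ h => charExp_injective (DFunLike.ext'_iff.mp h)

def trigPolyAlgHom : AddMonoidAlgebra ℂ (ℤ × ℤ) →ₐ[ℂ] (ℝ × ℝ → ℂ) :=
  AddMonoidAlgebra.lift ℂ _ _
    ⟨⟨fun p => charExp p.toAdd, funext charExp_zero_left⟩,
      fun p q => funext (charExp_add_left p.toAdd q.toAdd)⟩

theorem trigPolyAlgHom_apply (c : AddMonoidAlgebra ℂ (ℤ × ℤ)) (ξ : ℝ × ℝ) :
    trigPolyAlgHom c ξ = trigPoly c.coeff ξ.1 ξ.2 := by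
  simp [trigPolyAlgHom, AddMonoidAlgebra.lift_apply, trigPoly, Finsupp.sum, charExp]

theorem trigPolyAlgHom_injective : Injective trigPolyAlgHom := by
  have : ⇑trigPolyAlgHom = Finsupp.linearCombination ℂ charExp ∘ AddMonoidAlgebra.coeff := by
    ext c ξ
    simp [trigPolyAlgHom_apply, Finsupp.linearCombination_apply, trigPoly, Finsupp.sum, charExp]
  rw [this]
  exact Injective.comp linearIndependent_charExp AddMonoidAlgebra.coeff_injective

def diagScale (m n : ℤ) : ℤ × ℤ →+ ℤ × ℤ :=
  (AddMonoidHom.mulLeft m).prodMap (AddMonoidHom.mulLeft n)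

theorem diagScale_apply (m n : ℤ) (p : ℤ × ℤ) : diagScale m n p = (m * p.1, n * p.2) := rfl

theorem diagScale_injective {m n : ℤ} (hm : m ≠ 0) (hn : n ≠ 0) : Injective (diagScale m n) :=
  Prod.map_injective.mpr ⟨mul_right_injective₀ hm, mul_right_injective₀ hn⟩

theorem trigPoly_mapDomain_diagScale (m n : ℤ) (c : ℤ × ℤ →₀ ℂ) (ξ₁ ξ₂ : ℝ) :
    trigPoly (c.mapDomain (diagScale m n)) ξ₁ ξ₂ = trigPoly c (m * ξ₁) (n * ξ₂) := by
  rw [trigPoly, Finsupp.sum_mapDomain_index (fun _ => zero_mul _) (fun _ _ _ => add_mul _ _ _)]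
  refine Finsupp.sum_congr fun p _ => ?_
  simp only [diagScale_apply]
  push_cast
  ring_nf

theorem snd_eq_zero_and_fst_eq_zero_of_diagScale_add_eq {α β : ℤ} (hα : α ≠ 1) (hβ : β ≠ 1)
    {a b : ℤ × ℤ} (h : diagScale 1 β a + b = a + diagScale α 1 b) : a.2 = 0 ∧ b.1 = 0 := by
  obtain ⟨h₁, h₂⟩ := Prod.ext_iff.mp h
  simp only [Prod.fst_add, Prod.snd_add, diagScale_apply] at h₁ h₂
  have ha : (β - 1) * a.2 = 0 := by linarith
  have hb : (α - 1) * b.1 = 0 := by linarith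
  exact ⟨(mul_eq_zero.mp ha).resolve_left (sub_ne_zero.mpr hβ),
    (mul_eq_zero.mp hb).resolve_left (sub_ne_zero.mpr hα)⟩

theorem toLex_diagScale_le {m n : ℤ} (hm : 0 < m) (hn : 0 < n) {p q : ℤ × ℤ}
    (h : toLex p ≤ toLex q) : toLex (diagScale m n p) ≤ toLex (diagScale m n q) := by
  rw [Prod.Lex.toLex_le_toLex] at h ⊢
  rcases h with h | ⟨h₁, h₂⟩
  · exact Or.inl (mul_lt_mul_of_pos_left h hm)
  · exact Or.inr ⟨congrArg (m * ·) h₁, mul_le_mul_of_nonneg_left h₂ hn.le⟩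

variable {B : Type*} [AddCommGroup B] [LinearOrder B] [IsOrderedAddMonoid B]

structure IsScalingDegree (D : ℤ × ℤ →+ B) : Prop where
  injective : Injective D
  le_diagScale : ∀ {m n : ℤ}, 0 < m → 0 < n → ∀ {p q}, D p ≤ D q →
    D (diagScale m n p) ≤ D (diagScale m n q)

theorem IsScalingDegree.neg {D : ℤ × ℤ →+ B} (hD : IsScalingDegree D) :
    IsScalingDegree (-D) where
  injective := neg_injective.comp hD.injective
  le_diagScale hm hn p q h := by
    simp only [AddMonoidHom.neg_apply, neg_le_neg_iff] at h ⊢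
    exact hD.le_diagScale hm hn h

def lexFst : ℤ × ℤ →+ ℤ ×ₗ ℤ := (toLexAddEquiv (ℤ × ℤ)).toAddMonoidHom

def lexSnd : ℤ × ℤ →+ ℤ ×ₗ ℤ := lexFst.comp (AddEquiv.prodComm : ℤ × ℤ ≃+ ℤ × ℤ).toAddMonoidHom

theorem isScalingDegree_lexFst : IsScalingDegree lexFst where
  injective := toLex.injective
  le_diagScale hm hn _ _ h := toLex_diagScale_le hm hn h

theorem isScalingDegree_lexSnd : IsScalingDegree lexSnd where
  injective := toLex.injective.comp Prod.swap_injective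
  le_diagScale hm hn p q h := toLex_diagScale_le (p := p.swap) (q := q.swap) hn hm h

theorem IsScalingDegree.exists_isMaxOn {D : ℤ × ℤ →+ B} (hD : IsScalingDegree D)
    {α β : ℤ} (hα : 2 ≤ α) (hβ : 2 ≤ β) {f g : AddMonoidAlgebra ℂ (ℤ × ℤ)} (hf : f ≠ 0) (hg : g ≠ 0)
    (hfg : mapDomain (diagScale 1 β) f * g = f * mapDomain (diagScale α 1) g) :
    ∃ a₀ b₀, IsMaxOn D f.coeff.support a₀ ∧ IsMaxOn D g.coeff.support b₀ ∧ a₀.2 = 0 ∧ b₀.1 = 0 := by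
  obtain ⟨a₀, b₀, ha₀, hb₀, h⟩ := exists_isMaxOn_add_eq_add_of_mapDomain_mul_eq hD.injective
    (diagScale_injective one_ne_zero (by omega)) (diagScale_injective (by omega) one_ne_zero)
    (fun _ _ => hD.le_diagScale one_pos (by omega)) (fun _ _ => hD.le_diagScale (by omega) one_pos)
    hf hg hfg
  exact ⟨a₀, b₀, ha₀, hb₀,
    snd_eq_zero_and_fst_eq_zero_of_diagScale_add_eq (by omega) (by omega) h⟩

theorem support_snd_eq_zero_and_fst_eq_zero_of_mapDomain_mul_eq {α β : ℤ} (hα : 2 ≤ α) (hβ : 2 ≤ β)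
    {f g : AddMonoidAlgebra ℂ (ℤ × ℤ)} (hf : f ≠ 0) (hg : g ≠ 0)
    (hfg : mapDomain (diagScale 1 β) f * g = f * mapDomain (diagScale α 1) g) :
    (∀ p ∈ f.coeff.support, p.2 = 0) ∧ (∀ p ∈ g.coeff.support, p.1 = 0) := by
  obtain ⟨a₁, -, ha₁, -, ha₁0, -⟩ := isScalingDegree_lexSnd.exists_isMaxOn hα hβ hf hg hfg
  obtain ⟨a₂, -, ha₂, -, ha₂0, -⟩ := isScalingDegree_lexSnd.neg.exists_isMaxOn hα hβ hf hg hfg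
  obtain ⟨-, b₁, -, hb₁, -, hb₁0⟩ := isScalingDegree_lexFst.exists_isMaxOn hα hβ hf hg hfg
  obtain ⟨-, b₂, -, hb₂, -, hb₂0⟩ := isScalingDegree_lexFst.neg.exists_isMaxOn hα hβ hf hg hfg
  refine ⟨fun p hp => le_antisymm ?_ ?_, fun p hp => le_antisymm ?_ ?_⟩
  · exact ha₁0 ▸ Prod.Lex.monotone_fst _ _ (ha₁ hp)
  · exact ha₂0 ▸ Prod.Lex.monotone_fst _ _ (neg_le_neg_iff.mp (ha₂ hp))
  · exact hb₁0 ▸ Prod.Lex.monotone_fst _ _ (hb₁ hp)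
  · exact hb₂0 ▸ Prod.Lex.monotone_fst _ _ (neg_le_neg_iff.mp (hb₂ hp))

end TrigPoly

open AddMonoidAlgebra TrigPoly

/-- if nonzero trigonometric polynomials `a`, `b` on `ℝ²` satisfy
`a(ξ₁, βξ₂) b(ξ₁, ξ₂) = a(ξ₁, ξ₂) b(αξ₁, ξ₂)` for integers `α, β ≥ 2`, then `a` depends
only on `ξ₁` and `b` depends only on `ξ₂`. -/
theorem trig_poly_intertwining_separation (α β : ℤ) (hα : 2 ≤ α) (hβ : 2 ≤ β)
    (ca cb : ℤ × ℤ →₀ ℂ) (hca : ca ≠ 0) (hcb : cb ≠ 0)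
    (h : ∀ ξ₁ ξ₂ : ℝ,
      trigPoly ca ξ₁ ((β : ℝ) * ξ₂) * trigPoly cb ξ₁ ξ₂
        = trigPoly ca ξ₁ ξ₂ * trigPoly cb ((α : ℝ) * ξ₁) ξ₂) :
    (∀ p : ℤ × ℤ, p.2 ≠ 0 → ca p = 0) ∧ (∀ p : ℤ × ℤ, p.1 ≠ 0 → cb p = 0) := by
  have hfg : mapDomain (diagScale 1 β) (ofCoeff ca) * ofCoeff cb
      = ofCoeff ca * mapDomain (diagScale α 1) (ofCoeff cb) := by
    refine trigPolyAlgHom_injective (funext fun ξ => ?_)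
    rw [map_mul, map_mul]
    simp only [Pi.mul_apply, trigPolyAlgHom_apply, coeff_mapDomain,
      trigPoly_mapDomain_diagScale, Int.cast_one, one_mul]
    exact_mod_cast h ξ.1 ξ.2
  obtain ⟨hca', hcb'⟩ := support_snd_eq_zero_and_fst_eq_zero_of_mapDomain_mul_eq hα hβ
    (mt ofCoeff_eq_zero.mp hca) (mt ofCoeff_eq_zero.mp hcb) hfg
  exact ⟨fun p hp => Finsupp.notMem_support_iff.mp (mt (hca' p) hp),
    fun p hp => Finsupp.notMem_support_iff.mp (mt (hcb' p) hp)⟩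
end
end

section
/- Let T be a symmetric invertible d×d integer matrix with t = |det T|, and let d₀, d₁, …, d_{t−1} ∈ ℤ^d be a complete set of representatives of the cosets of Tℤ^d in ℤ^d. Then the t×t complex matrix M with entries M_{j,k} = t^{−1/2} e^{−2πi ⟨T^{−1} d_k, d_j⟩}, 0 ≤ j, k ≤ t−1, is unitary. -/
open Complex

noncomputable section

/-- `dvec` is a complete set of representatives of the cosets of `Tℤ^d` in `ℤ^d`. -/
def IsCompleteCosetReps {d t : ℕ} (T : Matrix (Fin d) (Fin d) ℤ)
    (dvec : Fin t → Fin d → ℤ) : Prop :=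
  ∀ k : Fin d → ℤ, ∃! i : Fin t, ∃ m : Fin d → ℤ, k = dvec i + T.mulVec m

/-!
For symmetric `T`, the function `χₓ v = e^{-2πi⟨T⁻¹x, v⟩}` is an additive character of `ℤ^d`
that is trivial on `Tℤ^d`, i.e. a character of the finite group `ℤ^d / Tℤ^d`; it is the trivial
character exactly when `x ∈ Tℤ^d`. Since `(M Mᴴ)_{jl} = t⁻¹ ∑_k χ_{d_j - d_l}(d_k)`, unitarity is
orthogonality of characters: a nontrivial character sums to zero over a complete set of coset
representatives, because translating the representatives only permutes their cosets.
-/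

open Matrix ComplexConjugate
open scoped Real

theorem AddChar.sum_comp_cosetReps_eq_zero {G R ι : Type*} [AddCommGroup G] [CommRing R]
    [IsDomain R] [Fintype ι] {H : AddSubgroup G} {reps : ι → G}
    (hreps : ∀ g, ∃! i, ∃ h ∈ H, g = reps i + h) {ψ : AddChar G R} (hψH : ∀ h ∈ H, ψ h = 1)
    (hψ : ψ ≠ 1) : ∑ i, ψ (reps i) = 0 := by
  obtain ⟨g, hg⟩ := AddChar.ne_one_iff.1 hψ
  choose σ hσ using fun i => (hreps (g + reps i)).exists
  have hψσ : ∀ i, ψ (g + reps i) = ψ (reps (σ i)) := fun i => by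
    obtain ⟨h, hH, hgh⟩ := hσ i
    rw [hgh, AddChar.map_add_eq_mul, hψH h hH, mul_one]
  have hσ_inj : Function.Injective σ := fun i i' hii' => by
    obtain ⟨h, hH, hgh⟩ := hσ i
    obtain ⟨h', hH', hgh'⟩ := hσ i'
    refine (hreps (reps i)).unique ⟨0, H.zero_mem, (add_zero _).symm⟩
      ⟨h - h', H.sub_mem hH hH', ?_⟩
    rw [hii'] at hgh
    linear_combination (norm := abel_nf) hgh - hgh'
  have hshift : ψ g * ∑ i, ψ (reps i) = ∑ i, ψ (reps i) := by
    simp only [Finset.mul_sum, ← AddChar.map_add_eq_mul, hψσ]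
    exact Fintype.sum_bijective σ hσ_inj.bijective_of_finite _ _ fun _ => rfl
  exact eq_zero_of_mul_eq_self_left hg hshift

variable {n : Type*} [Fintype n]

def intVecChar (w : n → ℝ) : AddChar (n → ℤ) ℂ where
  toFun v := exp (-(2 * π * I) * (w ⬝ᵥ (Int.cast ∘ v) : ℝ))
  map_zero_eq_one' := by simp
  map_add_eq_mul' a b := by
    rw [← Complex.exp_add, ← mul_add, ← ofReal_add, ← dotProduct_add]
    congr
    ext i
    simp

theorem intVecChar_apply (w : n → ℝ) (v : n → ℤ) :
    intVecChar w v = exp (-(2 * π * I) * (w ⬝ᵥ (Int.cast ∘ v) : ℝ)) := rfl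

theorem intVecChar_intCast (m : n → ℤ) : intVecChar (Int.cast ∘ m) = 1 := by
  ext v
  have hdot : (Int.cast ∘ m : n → ℝ) ⬝ᵥ (Int.cast ∘ v) = ((m ⬝ᵥ v : ℤ) : ℝ) := by
    simp [dotProduct]
  rw [intVecChar_apply, AddChar.one_apply, hdot, ofReal_intCast, neg_mul, mul_comm, ← neg_mul,
    ← Int.cast_neg, exp_int_mul_two_pi_mul_I]

theorem intVecChar_eq_one_iff [DecidableEq n] {w : n → ℝ} :
    intVecChar w = 1 ↔ ∃ m : n → ℤ, w = Int.cast ∘ m := by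
  refine ⟨fun h => ?_, fun ⟨m, hm⟩ => hm ▸ intVecChar_intCast m⟩
  have hint : ∀ i, ∃ c : ℤ, w i = c := fun i => by
    have hi := DFunLike.congr_fun h (Pi.single i 1)
    rw [intVecChar_apply, AddChar.one_apply, Complex.exp_eq_one_iff] at hi
    obtain ⟨c, hc⟩ := hi
    have hsingle : w ⬝ᵥ (Int.cast ∘ Pi.single i 1 : n → ℝ) = w i := by
      simp [dotProduct, Pi.single_apply]
    rw [hsingle] at hc
    have h2πI : 2 * (π : ℂ) * I ≠ 0 := by simp [Real.pi_ne_zero]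
    have hwc : (w i : ℂ) = ((-c : ℤ) : ℂ) :=
      mul_right_cancel₀ h2πI (by push_cast; linear_combination -hc)
    exact ⟨-c, by exact_mod_cast hwc⟩
  choose m hm using hint
  exact ⟨m, funext hm⟩

theorem intVecChar_sub_apply (w₁ w₂ : n → ℝ) (v : n → ℤ) :
    intVecChar (w₁ - w₂) v = intVecChar w₁ v * conj (intVecChar w₂ v) := by
  simp only [intVecChar_apply, ← Complex.exp_conj, ← Complex.exp_add, map_mul, map_neg,
    conj_ofReal, conj_I, map_ofNat, sub_dotProduct]
  congr 1
  push_cast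
  ring

theorem Matrix.intCast_comp_mulVec {m R : Type*} [Ring R] (T : Matrix m n ℤ) (v : n → ℤ) :
    (Int.cast ∘ (T *ᵥ v) : m → R) = T.map Int.cast *ᵥ (Int.cast ∘ v) :=
  funext (RingHom.map_mulVec (Int.castRingHom R) T v)

variable [DecidableEq n]

theorem Matrix.inv_mulVec_eq_iff {K : Type*} [Field K] {A : Matrix n n K} (hA : IsUnit A.det)
    {u v : n → K} : A⁻¹ *ᵥ u = v ↔ u = A *ᵥ v := by
  constructor
  · rintro rfl
    rw [mulVec_mulVec, mul_nonsing_inv A hA, one_mulVec]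
  · rintro rfl
    rw [mulVec_mulVec, nonsing_inv_mul A hA, one_mulVec]

theorem Matrix.isUnit_det_map_intCast {K : Type*} [Field K] [CharZero K] {T : Matrix n n ℤ}
    (hdet : T.det ≠ 0) : IsUnit (T.map (Int.cast : ℤ → K)).det := by
  rw [isUnit_iff_ne_zero, ← Int.cast_det]
  exact_mod_cast hdet

def cosetChar (T : Matrix n n ℤ) (x : n → ℤ) : AddChar (n → ℤ) ℂ :=
  intVecChar ((T.map (Int.cast : ℤ → ℝ))⁻¹ *ᵥ (Int.cast ∘ x))

variable {T : Matrix n n ℤ}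

theorem cosetChar_zero : cosetChar T 0 = 1 := by
  simpa [cosetChar] using intVecChar_intCast (0 : n → ℤ)

theorem cosetChar_sub_apply (x y v : n → ℤ) :
    cosetChar T (x - y) v = cosetChar T x v * conj (cosetChar T y v) := by
  have hcast : (Int.cast ∘ (x - y) : n → ℝ) = Int.cast ∘ x - Int.cast ∘ y := by
    ext; simp
  rw [cosetChar, hcast, mulVec_sub, intVecChar_sub_apply]
  rfl

theorem cosetChar_apply_comm (hsymm : Tᵀ = T) (x y : n → ℤ) :
    cosetChar T x y = cosetChar T y x := by
  have hinv : (T.map (Int.cast : ℤ → ℝ))⁻¹ᵀ = (T.map Int.cast)⁻¹ := by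
    rw [transpose_nonsing_inv, ← transpose_map, hsymm]
  simp only [cosetChar, intVecChar_apply]
  rw [dotProduct_comm, dotProduct_mulVec, ← mulVec_transpose, hinv]

theorem cosetChar_eq_one_iff (hdet : T.det ≠ 0) {x : n → ℤ} :
    cosetChar T x = 1 ↔ ∃ m, x = T *ᵥ m := by
  simp only [cosetChar, intVecChar_eq_one_iff, inv_mulVec_eq_iff (isUnit_det_map_intCast hdet),
    ← intCast_comp_mulVec]
  exact exists_congr fun m => (Int.cast_injective.comp_left).eq_iff

theorem cosetChar_apply_mulVec (hsymm : Tᵀ = T) (hdet : T.det ≠ 0) (x m : n → ℤ) :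
    cosetChar T x (T *ᵥ m) = 1 := by
  rw [cosetChar_apply_comm hsymm, (cosetChar_eq_one_iff hdet).2 ⟨m, rfl⟩, AddChar.one_apply]

theorem IsCompleteCosetReps.existsUnique_add_mem_range {d t : ℕ} {T : Matrix (Fin d) (Fin d) ℤ}
    {dvec : Fin t → Fin d → ℤ} (hreps : IsCompleteCosetReps T dvec) (k : Fin d → ℤ) :
    ∃! i, ∃ h ∈ (LinearMap.range T.mulVecLin).toAddSubgroup, k = dvec i + h := by
  simpa using hreps k

theorem IsCompleteCosetReps.sum_cosetChar_sub {d t : ℕ} {T : Matrix (Fin d) (Fin d) ℤ}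
    {dvec : Fin t → Fin d → ℤ} (hreps : IsCompleteCosetReps T dvec) (hsymm : Tᵀ = T)
    (hdet : T.det ≠ 0) (j l : Fin t) :
    ∑ k, cosetChar T (dvec j - dvec l) (dvec k) = if j = l then (t : ℂ) else 0 := by
  split_ifs with hjl
  · simp [hjl, cosetChar_zero]
  refine AddChar.sum_comp_cosetReps_eq_zero hreps.existsUnique_add_mem_range ?_ ?_
  · rintro _ ⟨m, rfl⟩
    exact cosetChar_apply_mulVec hsymm hdet _ m
  · rw [Ne, cosetChar_eq_one_iff hdet]
    rintro ⟨m, hm⟩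
    exact hjl <| (hreps (dvec j)).unique ⟨0, by simp⟩ ⟨m, eq_add_of_sub_eq' hm⟩

/-- for a symmetric invertible integer matrix `T` with `t = |det T|` and a
complete set of coset representatives `d₀, …, d_{t−1}` of `Tℤ^d` in `ℤ^d`, the `t × t`
matrix with entries `t^{-1/2} e^{-2πi⟨T⁻¹ d_k, d_j⟩}` is unitary. -/
theorem coset_character_matrix_unitary (d : ℕ) (T : Matrix (Fin d) (Fin d) ℤ)
    (hsymm : T.transpose = T) (hdet : T.det ≠ 0)
    (dvec : Fin T.det.natAbs → Fin d → ℤ)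
    (hreps : IsCompleteCosetReps T dvec)
    (M : Matrix (Fin T.det.natAbs) (Fin T.det.natAbs) ℂ)
    (hM : ∀ j k, M j k = ((1 / Real.sqrt T.det.natAbs : ℝ) : ℂ) *
      Complex.exp (-(2 * (Real.pi : ℂ) * Complex.I) *
        ((∑ i, ((T.map (Int.cast : ℤ → ℝ))⁻¹.mulVec (fun i' => (dvec k i' : ℝ))) i *
          (dvec j i : ℝ) : ℝ) : ℂ))) :
    M * M.conjTranspose = 1 ∧ M.conjTranspose * M = 1 := by
  have hM' : ∀ j k, M j k = ((1 / √T.det.natAbs : ℝ) : ℂ) * cosetChar T (dvec j) (dvec k) :=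
    fun j k => by
      rw [hM, cosetChar_apply_comm hsymm]
      rfl
  have hcoef : ((1 / √T.det.natAbs : ℝ) : ℂ) * conj ((1 / √T.det.natAbs : ℝ) : ℂ) =
      (T.det.natAbs : ℂ)⁻¹ := by
    rw [conj_ofReal, ← ofReal_mul, div_mul_div_comm, one_mul,
      Real.mul_self_sqrt (Nat.cast_nonneg _), one_div, ofReal_inv, ofReal_natCast]
  have ht : (T.det.natAbs : ℂ) ≠ 0 := Nat.cast_ne_zero.2 (Int.natAbs_ne_zero.2 hdet)
  have hunitary : M * Mᴴ = 1 := by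
    ext j l
    calc (M * Mᴴ) j l = (T.det.natAbs : ℂ)⁻¹ * ∑ k, cosetChar T (dvec j - dvec l) (dvec k) := by
          simp only [mul_apply, conjTranspose_apply, hM', cosetChar_sub_apply, Finset.mul_sum,
            star_def, map_mul, ← hcoef]
          exact Finset.sum_congr rfl fun k _ => by ring
      _ = (1 : Matrix _ _ ℂ) j l := by
          rw [hreps.sum_cosetChar_sub hsymm hdet, one_apply]
          split_ifs
          · exact inv_mul_cancel₀ ht
          · exact mul_zero _
  exact ⟨hunitary, mul_eq_one_comm.mp hunitary⟩

end
end
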